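/- arXiv:2506.11495 — 2 statements merged into one kernel-verified Lean document; each statement's English description precedes it below -/
import Mathlib

section
/- Let J(R) be the Jacobson radical of R. If the cosets x + J(R) and y + J(R) are adjacent in G_UZ(R/J(R)), then for every a in x + J(R) and every b in y + J(R), a and b are adjacent in G_UZ(R). -/
/-!
Reduction modulo the Jacobson radical is a local homomorphism, so it reflects units; in a finite
ring every non-unit is a zero divisor. Hence each of the three conditions of adjacency in
`G_UZ(R/J(R))` lifts to arbitrary representatives.
-/

open SimpleGraph

/-- The unit-zero divisor graph of a commutative ring: distinct `u`, `v` are adjacent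
iff `u + v` is a unit and `u * v` is a zero divisor. -/
def GUZ (R : Type*) [CommRing R] : SimpleGraph R where
  Adj u v := u ≠ v ∧ IsUnit (u + v) ∧ ∃ y : R, y ≠ 0 ∧ u * v * y = 0
  symm := by
    constructor
    intro u v h
    refine ⟨h.1.symm, ?_, ?_⟩
    · rw [add_comm]; exact h.2.1
    · rw [mul_comm]; exact h.2.2
  loopless := by constructor; intro u h; exact h.1 rfl

theorem exists_ne_zero_mul_eq_zero_iff_not_isUnit {R : Type*} [CommRing R] [Finite R] {a : R} :
    (∃ y : R, y ≠ 0 ∧ a * y = 0) ↔ ¬IsUnit a := by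
  rw [isUnit_iff_mem_nonZeroDivisors_of_finite, mem_nonZeroDivisors_iff_left]
  push Not
  exact exists_congr fun _ => and_comm

theorem GUZ.adj_of_adj_map {R S : Type*} [CommRing R] [CommRing S] [Finite R] (f : R →+* S)
    [IsLocalHom f] {a b : R} (h : (GUZ S).Adj (f a) (f b)) : (GUZ R).Adj a b := by
  obtain ⟨hne, hunit, z, hz, hzero⟩ := h
  refine ⟨fun hab => hne (congrArg f hab), ?_, ?_⟩
  · exact isUnit_of_map_unit f _ (by rwa [map_add])
  · have hfab : ¬IsUnit (f (a * b)) := by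
      rw [map_mul]
      exact fun hu => hz (hu.mul_right_eq_zero.mp hzero)
    exact exists_ne_zero_mul_eq_zero_iff_not_isUnit.mpr fun hab => hfab (hab.map f)

/-- If the cosets `x + J(R)` and `y + J(R)` are adjacent in `G_UZ(R/J(R))`, then every
element of `x + J(R)` is adjacent to every element of `y + J(R)` in `G_UZ(R)`. -/
theorem stmt14 (R : Type*) [CommRing R] [Fintype R] (x y : R)
    (h : (GUZ (R ⧸ Ideal.jacobson (⊥ : Ideal R))).Adj
      (Ideal.Quotient.mk (Ideal.jacobson (⊥ : Ideal R)) x)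
      (Ideal.Quotient.mk (Ideal.jacobson (⊥ : Ideal R)) y)) :
    ∀ a b : R, a - x ∈ Ideal.jacobson (⊥ : Ideal R) →
      b - y ∈ Ideal.jacobson (⊥ : Ideal R) → (GUZ R).Adj a b := by
  intro a b ha hb
  have := isLocalHom_of_le_jacobson_bot (Ideal.jacobson (⊥ : Ideal R)) le_rfl
  rw [← Ideal.Quotient.eq.mpr ha, ← Ideal.Quotient.eq.mpr hb] at h
  exact GUZ.adj_of_adj_map _ h
end

section
/- G_UZ(Z_n) is a star graph if and only if n is prime. -/
/-!
If `c` is the centre of a star, then `c + v` is a unit for every `v ≠ c`. Taking `v = -c` shows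
`c + c = 0` (otherwise `0` would be a unit), and then every `w ≠ 0` is the unit `c + (w - c)`:
the ring is a field, and `ZMod n` is a field only for prime `n`. Conversely, in a field a product
is a zero divisor only when it vanishes, so `0` is the centre of a star.
-/

open SimpleGraph

def SimpleGraph.IsStarCenter {V : Type*} (G : SimpleGraph V) (c : V) : Prop :=
  (∀ v, v ≠ c → G.Adj c v) ∧ ∀ u v, G.Adj u v → u = c ∨ v = c

section StarCenter

variable {R : Type*} [CommRing R] [Nontrivial R]

theorem isUnit_of_forall_ne_isUnit_add {c : R} (h : ∀ v, v ≠ c → IsUnit (c + v))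
    {w : R} (hw : w ≠ 0) : IsUnit w := by
  have hcc : c + c = 0 := by
    by_contra hcc
    have hneg : -c ≠ c := fun hc => hcc (by linear_combination -hc)
    simpa using h (-c) hneg
  have hne : w - c ≠ c := fun hwc => hw (by linear_combination hwc + hcc)
  simpa using h (w - c) hne

theorem isField_of_isStarCenter_GUZ {c : R} (hc : (GUZ R).IsStarCenter c) : IsField R where
  exists_pair_ne := exists_pair_ne R
  mul_comm := mul_comm
  mul_inv_cancel hw :=
    (isUnit_of_forall_ne_isUnit_add (fun v hv => (hc.1 v hv).2.1) hw).exists_right_inv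

end StarCenter

theorem isStarCenter_GUZ_zero (K : Type*) [Field K] : (GUZ K).IsStarCenter 0 := by
  refine ⟨fun v hv => ⟨hv.symm, by simpa using hv.isUnit, 1, one_ne_zero, by simp⟩, ?_⟩
  rintro u v ⟨-, -, y, hy, huvy⟩
  simpa [hy] using huvy

theorem Nat.prime_of_isField_zmod {n : ℕ} (hn : 2 ≤ n) (h : IsField (ZMod n)) : n.Prime :=
  have := h.isDomain
  CharP.char_is_prime_of_two_le (ZMod n) n hn

/-- `G_UZ(ℤ_n)` is a star graph if and only if `n` is prime. -/
theorem stmt16 (n : ℕ) (hn : 2 ≤ n) :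
    (∃ c : ZMod n, (∀ v : ZMod n, v ≠ c → (GUZ (ZMod n)).Adj c v) ∧
      ∀ u v : ZMod n, (GUZ (ZMod n)).Adj u v → u = c ∨ v = c) ↔ n.Prime := by
  constructor
  · rintro ⟨c, hc⟩
    have : Nontrivial (ZMod n) := ZMod.nontrivial_iff.2 (by omega)
    exact Nat.prime_of_isField_zmod hn (isField_of_isStarCenter_GUZ hc)
  · intro hp
    have := Fact.mk hp
    exact ⟨0, isStarCenter_GUZ_zero (ZMod n)⟩
end
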